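/- Let φ:[0,∞)→[0,∞) satisfy (aInc)_p and (aDec)_q for some 1 < p ≤ q with constant L. Then the conjugate φ*(s) = sup_{t≥0}(st − φ(t)) satisfies (aInc)_{q'} and (aDec)_{p'}, where p' = p/(p−1) and q' = q/(q−1), with constants depending only on p, q, L. -/

import Mathlib

/-!
Substituting `r = c ρ` in the supremum defining `φ*` turns a scaling bound
`c ^ γ φ(ρ) ≤ L φ(c ρ)` into `φ*(u) ≤ (c ^ γ / L) φ*(v)` as soon as `c ^ (γ - 1) = L u / v`.
For `s ≤ t`, (aInc)_p gives that bound with `c ≥ 1`, which is (aDec)_{p'} of `φ*`; (aDec)_q gives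
it with `c ≤ 1`, which is (aInc)_{q'} of `φ*` when `L s ≤ t`, while for `t < L s` monotonicity
of `φ*` suffices. The growth `φ(r) ≳ r ^ p` at infinity and `φ(r) ≲ r ^ p` at `0` make `φ*` finite
and nonnegative on `(0, ∞)`, unless `φ(1) = 0`: then `φ` vanishes on `[1, ∞)`, the supremum is
unbounded and `φ*` takes the junk value `0` there.
-/

open Set Filter Topology

def AInc (γ L : ℝ) (f : ℝ → ℝ) : Prop :=
  ∀ s t : ℝ, 0 < s → s ≤ t → f s / s ^ γ ≤ L * (f t / t ^ γ)

def ADec (γ L : ℝ) (f : ℝ → ℝ) : Prop :=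
  ∀ s t : ℝ, 0 < s → s ≤ t → f t / t ^ γ ≤ L * (f s / s ^ γ)

noncomputable def youngConjugate (φ : ℝ → ℝ) (u : ℝ) : ℝ :=
  ⨆ r : {r : ℝ // 0 ≤ r}, u * (r : ℝ) - φ (r : ℝ)

section Scaling

variable {γ L : ℝ} {f : ℝ → ℝ}

theorem AInc.mono (hf : AInc γ L f) (hf0 : ∀ t, 0 < t → 0 ≤ f t) {L' : ℝ} (hL : L ≤ L') :
    AInc γ L' f := fun s t hs hst =>
  (hf s t hs hst).trans <| mul_le_mul_of_nonneg_right hL <|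
    div_nonneg (hf0 t (hs.trans_le hst)) (Real.rpow_nonneg (hs.le.trans hst) γ)

theorem AInc.rpow_mul_le (hf : AInc γ L f) {c ρ : ℝ} (hc : 1 ≤ c) (hρ : 0 < ρ) :
    c ^ γ * f ρ ≤ L * f (c * ρ) := by
  have hc0 : 0 < c := one_pos.trans_le hc
  have h := hf ρ (c * ρ) hρ (le_mul_of_one_le_left hρ.le hc)
  have : 0 < c ^ γ := by positivity
  have : 0 < ρ ^ γ := by positivity
  rw [Real.mul_rpow hc0.le hρ.le] at h
  field_simp at h
  linarith

theorem ADec.rpow_mul_le (hf : ADec γ L f) {c ρ : ℝ} (hc0 : 0 < c) (hc : c ≤ 1) (hρ : 0 < ρ) :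
    c ^ γ * f ρ ≤ L * f (c * ρ) := by
  have h := hf (c * ρ) ρ (by positivity) (mul_le_of_le_one_left hρ.le hc)
  have : 0 < c ^ γ := by positivity
  have : 0 < ρ ^ γ := by positivity
  rw [Real.mul_rpow hc0.le hρ.le] at h
  field_simp at h
  linarith

theorem AInc.eventually_mul_le (hf : AInc γ L f) (hγ : 1 < γ) (hL : 0 < L) (h1 : 0 < f 1)
    (u : ℝ) : ∀ᶠ r in atTop, u * r ≤ f r := by
  filter_upwards [eventually_ge_atTop 1,
    (tendsto_rpow_atTop (sub_pos.2 hγ)).eventually_ge_atTop (L * u / f 1)] with r hr1 hr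
  have hr0 : 0 < r := one_pos.trans_le hr1
  have h := hf.rpow_mul_le hr1 one_pos
  rw [mul_one] at h
  calc u * r = L * u / f 1 * r * (f 1 / L) := by field_simp
    _ ≤ r ^ (γ - 1) * r * (f 1 / L) := by gcongr
    _ = r ^ γ * f 1 / L := by rw [Real.rpow_sub_one hr0.ne']; field_simp
    _ ≤ f r := by rw [div_le_iff₀ hL]; linarith

theorem AInc.exists_le_mul (hf : AInc γ L f) (hγ : 1 < γ) {u : ℝ} (hu : 0 < u) :
    ∃ r, 0 < r ∧ f r ≤ u * r := by
  have hlim : Tendsto (fun r => L * f 1 * r ^ (γ - 1)) (𝓝[>] 0) (𝓝 0) := by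
    have h := ((Real.continuousAt_rpow_const 0 (γ - 1) (Or.inr (by linarith))).tendsto).const_mul
      (L * f 1)
    rw [Real.zero_rpow (by linarith), mul_zero] at h
    exact h.mono_left nhdsWithin_le_nhds
  obtain ⟨r, hru, hr0, hr1⟩ :=
    ((hlim.eventually (gt_mem_nhds hu)).and (Ioc_mem_nhdsGT one_pos)).exists
  refine ⟨r, hr0, ?_⟩
  have h := hf r 1 hr0 hr1
  rw [Real.one_rpow, div_one, div_le_iff₀ (by positivity)] at h
  calc f r ≤ L * f 1 * r ^ (γ - 1) * r := by
        rwa [Real.rpow_sub_one hr0.ne', mul_assoc, div_mul_cancel₀ _ hr0.ne']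
    _ ≤ u * r := by gcongr

theorem ADec.le_zero_of_apply_one (hf : ADec γ L f) (h1 : f 1 = 0) {r : ℝ} (hr : 1 ≤ r) :
    f r ≤ 0 := by
  have h := hf 1 r one_pos hr
  rw [h1, zero_div, mul_zero] at h
  rwa [div_le_iff₀ (by positivity), zero_mul] at h

end Scaling

section Conjugate

variable {φ : ℝ → ℝ}

theorem youngConjugate_le {u M : ℝ} (h : ∀ r, 0 ≤ r → u * r - φ r ≤ M) :
    youngConjugate φ u ≤ M :=
  haveI : Nonempty {r : ℝ // 0 ≤ r} := ⟨⟨0, le_rfl⟩⟩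
  ciSup_le fun r => h r r.2

theorem le_youngConjugate {u r : ℝ}
    (hb : BddAbove (range fun r : {r : ℝ // 0 ≤ r} => u * (r : ℝ) - φ r)) (hr : 0 ≤ r) :
    u * r - φ r ≤ youngConjugate φ u :=
  le_ciSup hb ⟨r, hr⟩

theorem youngConjugate_le_youngConjugate {s t : ℝ}
    (hb : BddAbove (range fun r : {r : ℝ // 0 ≤ r} => t * (r : ℝ) - φ r)) (hst : s ≤ t) :
    youngConjugate φ s ≤ youngConjugate φ t :=
  youngConjugate_le fun _ hr =>
    (sub_le_sub_right (mul_le_mul_of_nonneg_right hst hr) _).trans (le_youngConjugate hb hr)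

theorem bddAbove_of_eventually_mul_le (hφ0 : ∀ r, 0 ≤ r → 0 ≤ φ r) {u : ℝ}
    (h : ∀ᶠ r in atTop, u * r ≤ φ r) :
    BddAbove (range fun r : {r : ℝ // 0 ≤ r} => u * (r : ℝ) - φ r) := by
  obtain ⟨R, hR⟩ := eventually_atTop.1 h
  refine ⟨|u| * max R 0, ?_⟩
  rintro _ ⟨⟨r, hr⟩, rfl⟩
  rcases le_total r R with hrR | hRr
  · calc u * r - φ r ≤ |u| * r := by
          linarith [hφ0 r hr, mul_le_mul_of_nonneg_right (le_abs_self u) hr]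
      _ ≤ |u| * max R 0 := by gcongr; exact le_max_of_le_left hrR
  · linarith [hR r hRr, mul_nonneg (abs_nonneg u) (le_max_right R 0)]

theorem youngConjugate_le_mul_of_scaling {u v K c : ℝ} (hK : 0 < K) (hc : 0 < c) (h0 : 0 ≤ φ 0)
    (hb : BddAbove (range fun r : {r : ℝ // 0 ≤ r} => v * (r : ℝ) - φ r))
    (hv : 0 ≤ youngConjugate φ v) (hscale : ∀ ρ, 0 < ρ → K * φ ρ ≤ φ (c * ρ))
    (huv : u * c = K * v) :
    youngConjugate φ u ≤ K * youngConjugate φ v := by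
  refine youngConjugate_le fun r hr => ?_
  rcases hr.eq_or_lt with rfl | hr
  · linarith [mul_nonneg hK.le hv]
  obtain ⟨ρ, hρ, rfl⟩ : ∃ ρ, 0 < ρ ∧ c * ρ = r := ⟨r / c, by positivity, by field_simp⟩
  calc u * (c * ρ) - φ (c * ρ) ≤ K * (v * ρ) - K * φ ρ := by
        rw [← mul_assoc, huv, mul_assoc]; linarith [hscale ρ hρ]
    _ = K * (v * ρ - φ ρ) := by ring
    _ ≤ K * youngConjugate φ v := by gcongr; exact le_youngConjugate hb hρ.le

theorem youngConjugate_div_rpow_le_of_scaling {γ L u v c : ℝ} (hγ : 1 < γ) (hL : 1 ≤ L)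
    (hu : 0 < u) (hv : 0 < v) (hc : 0 < c) (hcγ : c ^ (γ - 1) = L * u / v) (h0 : 0 ≤ φ 0)
    (hb : BddAbove (range fun r : {r : ℝ // 0 ≤ r} => v * (r : ℝ) - φ r))
    (hv' : 0 ≤ youngConjugate φ v) (hscale : ∀ ρ, 0 < ρ → c ^ γ * φ ρ ≤ L * φ (c * ρ)) :
    youngConjugate φ u / u ^ (γ / (γ - 1)) ≤
      L ^ (γ / (γ - 1)) * (youngConjugate φ v / v ^ (γ / (γ - 1))) := by
  have hL0 : 0 < L := one_pos.trans_le hL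
  have hcγ' : c ^ γ = L ^ (γ / (γ - 1)) * u ^ (γ / (γ - 1)) / v ^ (γ / (γ - 1)) := by
    rw [← Real.mul_rpow hL0.le hu.le, ← Real.div_rpow (by positivity) hv.le, ← hcγ,
      ← Real.rpow_mul hc.le, mul_div_cancel₀ _ (sub_pos.2 hγ).ne']
  have huv : u * c = c ^ γ / L * v := by
    rw [Real.rpow_sub_one hc.ne'] at hcγ
    field_simp at hcγ ⊢
    linarith
  have key := youngConjugate_le_mul_of_scaling (by positivity) hc h0 hb hv'
    (fun ρ hρ => by rw [div_mul_eq_mul_div, div_le_iff₀ hL0, mul_comm (φ _)]; exact hscale ρ hρ)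
    huv
  rw [div_le_iff₀ (by positivity)]
  calc youngConjugate φ u ≤ c ^ γ / L * youngConjugate φ v := key
    _ ≤ c ^ γ * youngConjugate φ v :=
        mul_le_mul_of_nonneg_right (div_le_self (by positivity) hL) hv'
    _ = L ^ (γ / (γ - 1)) * (youngConjugate φ v / v ^ (γ / (γ - 1))) * u ^ (γ / (γ - 1)) := by
        rw [hcγ']; ring

theorem youngConjugate_eq_zero_of_le_zero {u : ℝ} (hu : 0 < u) (hφ : ∀ r, 1 ≤ r → φ r ≤ 0) :
    youngConjugate φ u = 0 := by
  refine Real.iSup_of_not_bddAbove fun ⟨M, hM⟩ => ?_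
  set r := max 1 ((M + 1) / u)
  have hr1 : 1 ≤ r := le_max_left _ _
  have hMr : u * r - φ r ≤ M := hM ⟨⟨r, zero_le_one.trans hr1⟩, rfl⟩
  have : M + 1 ≤ u * r := by rw [← div_le_iff₀' hu]; exact le_max_right _ _
  linarith [hφ r hr1]

theorem AInc.aDec_youngConjugate {p L : ℝ} (hp : 1 < p) (hL : 1 ≤ L) (hf : AInc p L φ)
    (h0 : 0 ≤ φ 0) (hb : ∀ u, BddAbove (range fun r : {r : ℝ // 0 ≤ r} => u * (r : ℝ) - φ r))
    (hnn : ∀ u, 0 < u → 0 ≤ youngConjugate φ u) :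
    ADec (p / (p - 1)) (L ^ (p / (p - 1))) (youngConjugate φ) := by
  intro s t hs hst
  have ht := hs.trans_le hst
  have hLts : 0 < L * t / s := by positivity
  have hc1 : 1 ≤ (L * t / s) ^ (p - 1)⁻¹ :=
    Real.one_le_rpow ((one_le_div hs).2 (by nlinarith)) (inv_nonneg.2 (by linarith))
  exact youngConjugate_div_rpow_le_of_scaling hp hL ht hs (by positivity)
    (Real.rpow_inv_rpow hLts.le (by linarith)) h0 (hb s) (hnn s hs)
    (fun ρ hρ => hf.rpow_mul_le hc1 hρ)

theorem ADec.aInc_youngConjugate {q L : ℝ} (hq : 1 < q) (hL : 1 ≤ L) (hf : ADec q L φ)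
    (h0 : 0 ≤ φ 0) (hb : ∀ u, BddAbove (range fun r : {r : ℝ // 0 ≤ r} => u * (r : ℝ) - φ r))
    (hnn : ∀ u, 0 < u → 0 ≤ youngConjugate φ u) :
    AInc (q / (q - 1)) (L ^ (q / (q - 1))) (youngConjugate φ) := by
  intro s t hs hst
  have hL0 : 0 < L := one_pos.trans_le hL
  have ht := hs.trans_le hst
  rcases le_or_gt (L * s) t with hLst | htLs
  · have hLst' : 0 < L * s / t := by positivity
    have hc1 : (L * s / t) ^ (q - 1)⁻¹ ≤ 1 :=
      Real.rpow_le_one hLst'.le ((div_le_one ht).2 hLst) (inv_nonneg.2 (by linarith))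
    exact youngConjugate_div_rpow_le_of_scaling hq hL hs ht (by positivity)
      (Real.rpow_inv_rpow hLst'.le (by linarith)) h0 (hb t) (hnn t ht)
      (fun ρ hρ => hf.rpow_mul_le (by positivity) hc1 hρ)
  · set q' := q / (q - 1)
    have hpow : t ^ q' ≤ L ^ q' * s ^ q' := by
      rw [← Real.mul_rpow hL0.le hs.le]
      exact Real.rpow_le_rpow ht.le htLs.le (div_nonneg (by linarith) (by linarith))
    rw [div_le_iff₀ (by positivity)]
    calc youngConjugate φ s ≤ youngConjugate φ t := youngConjugate_le_youngConjugate (hb t) hst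
      _ = youngConjugate φ t / t ^ q' * t ^ q' := by field_simp
      _ ≤ youngConjugate φ t / t ^ q' * (L ^ q' * s ^ q') := by
          gcongr; exact div_nonneg (hnn t ht) (by positivity)
      _ = L ^ q' * (youngConjugate φ t / t ^ q') * s ^ q' := by ring

end Conjugate

/-- If `φ` satisfies (aInc)_p and (aDec)_q with constant `L` and
`1 < p ≤ q`, then the conjugate `φ*(s) = sup_{t ≥ 0}(s t − φ(t))` satisfies
(aInc)_{q'} and (aDec)_{p'}, where `p' = p/(p−1)`, `q' = q/(q−1)`, with a constant
depending only on `p, q, L`. -/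
theorem stmt4 (p q L : ℝ) (hp : 1 < p) (hpq : p ≤ q) (hL : 1 ≤ L) :
    ∃ L' : ℝ, 1 ≤ L' ∧
      ∀ φ : ℝ → ℝ,
        (∀ t : ℝ, 0 ≤ t → 0 ≤ φ t) →
        (∀ s t : ℝ, 0 < s → s ≤ t → φ s / s ^ p ≤ L * (φ t / t ^ p)) →
        (∀ s t : ℝ, 0 < s → s ≤ t → φ t / t ^ q ≤ L * (φ s / s ^ q)) →
        ∀ φs : ℝ → ℝ,
          (∀ u : ℝ, φs u = ⨆ r : {r : ℝ // 0 ≤ r}, (u * (r : ℝ) - φ (r : ℝ))) →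
          (∀ s t : ℝ, 0 < s → s ≤ t →
            φs s / s ^ (q / (q - 1)) ≤ L' * (φs t / t ^ (q / (q - 1)))) ∧
          (∀ s t : ℝ, 0 < s → s ≤ t →
            φs t / t ^ (p / (p - 1)) ≤ L' * (φs s / s ^ (p / (p - 1)))) := by
  have hq : 1 < q := hp.trans_le hpq
  have hexp : q / (q - 1) ≤ p / (p - 1) := by
    rw [div_le_div_iff₀ (by linarith) (by linarith)]; linarith
  refine ⟨L ^ (p / (p - 1)), Real.one_le_rpow hL (div_nonneg (by linarith) (by linarith)),
    fun φ hφ0 hinc hdec φs hφs => ?_⟩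
  obtain rfl : φs = youngConjugate φ := funext hφs
  rcases (hφ0 1 zero_le_one).eq_or_lt with h1 | h1
  · have hzero : ∀ u, 0 < u → youngConjugate φ u = 0 := fun u hu =>
      youngConjugate_eq_zero_of_le_zero hu fun r hr => ADec.le_zero_of_apply_one hdec h1.symm hr
    constructor <;> intro s t hs hst <;> simp [hzero s hs, hzero t (hs.trans_le hst)]
  have hb : ∀ u, BddAbove (range fun r : {r : ℝ // 0 ≤ r} => u * (r : ℝ) - φ r) := fun u =>
    bddAbove_of_eventually_mul_le hφ0 (AInc.eventually_mul_le hinc hp (by linarith) h1 u)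
  have hnn : ∀ u, 0 < u → 0 ≤ youngConjugate φ u := fun u hu => by
    obtain ⟨r, hr, hru⟩ := AInc.exists_le_mul hinc hp hu
    exact (sub_nonneg.2 hru).trans (le_youngConjugate (hb u) hr.le)
  exact ⟨(ADec.aInc_youngConjugate hq hL hdec (hφ0 0 le_rfl) hb hnn).mono hnn
      (Real.rpow_le_rpow_of_exponent_le hL hexp),
    AInc.aDec_youngConjugate hp hL hinc (hφ0 0 le_rfl) hb hnn⟩
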